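/- Let α ≥ 1. If a class C of probability distributions over a countable domain X is η-subtractive α-robustly learnable for every η ∈ (0,1), then C is subtractive 3α-robustly learnable. -/

import Mathlib

/-!
Run the `η`-learners on the grid `η_k = k / t`, each with accuracy `1 / t` and confidence
`1 - 1 / t²`, and select one by Lepski's rule with radii `r_k = α η_k + 1 / t`. Realizability at
level `η` implies realizability at every level `η' ≥ η`, so with probability `1 - 1 / t` every
learner with `η_k ≥ η` is within `r_k` of `p`. Then `k₀ = ⌈η t⌉` is admissible for the rule, the
selected index is at most `k₀`, and two triangle inequalities bound the error by
`3 r_{k₀} ≤ 3αη + 3(α + 1) / t`. The resolution `t` grows with the sample size; when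
`η > 1 - 1 / t` the bound `3αη ≥ 1` holds trivially.
-/

open scoped BigOperators ENNReal

namespace RobustDistLearn

variable {X : Type*}

/-- `p` is a probability mass function on `X`. -/
def IsPMF (p : X → ℝ) : Prop := (∀ x, 0 ≤ p x) ∧ ∑' x, p x = 1

/-- Total variation distance between two mass functions:
`d_TV(p,q) = (1/2)·∑ₓ |p x − q x|`. -/
noncomputable def dTV (p q : X → ℝ) : ℝ := (1 / 2) * ∑' x, |p x - q x|

/-- The probability, over a sample `S` of `n` i.i.d. draws from `p`, of the event `E`. -/
noncomputable def iidProb (p : X → ℝ) (n : ℕ) (E : Set (Fin n → X)) : ℝ :=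
  ∑' S : Fin n → X, E.indicator (fun T => ∏ i, p (T i)) S

/-- The mixture `η·q + (1−η)·p`. -/
def mix (η : ℝ) (q p : X → ℝ) : X → ℝ := fun x => η * q x + (1 - η) * p x

/-- `inf_{p' ∈ C} d_TV(p, p')`. -/
noncomputable def distToClass (p : X → ℝ) (C : Set (X → ℝ)) : ℝ := sInf (dTV p '' C)

/-- A learner maps, for each sample size `n`, a tuple `S ∈ Xⁿ` to a distribution over `X`. -/
def IsLearner (A : (n : ℕ) → (Fin n → X) → (X → ℝ)) : Prop := ∀ n S, IsPMF (A n S)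

/-- Realizable learnability of a class `C` of distributions. -/
def RealizablyLearnable (C : Set (X → ℝ)) : Prop :=
  ∃ A : (n : ℕ) → (Fin n → X) → (X → ℝ), IsLearner A ∧
    ∃ nC : ℝ → ℝ → ℕ,
      ∀ p ∈ C, ∀ ε ∈ Set.Ioo (0:ℝ) 1, ∀ δ ∈ Set.Ioo (0:ℝ) 1, ∀ n : ℕ, nC ε δ ≤ n →
        1 - δ ≤ iidProb p n {S | dTV (A n S) p ≤ ε}

/-- `α`-robust (agnostic) learnability. -/
def RobustlyLearnable (C : Set (X → ℝ)) (α : ℝ) : Prop :=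
  ∃ A : (n : ℕ) → (Fin n → X) → (X → ℝ), IsLearner A ∧
    ∃ nC : ℝ → ℝ → ℕ,
      ∀ p : X → ℝ, IsPMF p → ∀ ε ∈ Set.Ioo (0:ℝ) 1, ∀ δ ∈ Set.Ioo (0:ℝ) 1, ∀ n : ℕ, nC ε δ ≤ n →
        1 - δ ≤ iidProb p n {S | dTV (A n S) p ≤ α * distToClass p C + ε}

/-- Additive `α`-robust learnability. -/
def AdditiveRobustlyLearnable (C : Set (X → ℝ)) (α : ℝ) : Prop :=
  ∃ A : (n : ℕ) → (Fin n → X) → (X → ℝ), IsLearner A ∧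
    ∃ nC : ℝ → ℝ → ℕ,
      ∀ η ∈ Set.Ioo (0:ℝ) 1, ∀ q : X → ℝ, IsPMF q → ∀ p ∈ C,
        ∀ ε ∈ Set.Ioo (0:ℝ) 1, ∀ δ ∈ Set.Ioo (0:ℝ) 1, ∀ n : ℕ, nC ε δ ≤ n →
          1 - δ ≤ iidProb (mix η q p) n {S | dTV (A n S) (mix η q p) ≤ α * η + ε}

/-- Huber additive `α`-robust learnability: the guarantee is with respect to the clean `p`. -/
def HuberAdditiveRobustlyLearnable (C : Set (X → ℝ)) (α : ℝ) : Prop :=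
  ∃ A : (n : ℕ) → (Fin n → X) → (X → ℝ), IsLearner A ∧
    ∃ nC : ℝ → ℝ → ℕ,
      ∀ η ∈ Set.Ioo (0:ℝ) 1, ∀ q : X → ℝ, IsPMF q → ∀ p ∈ C,
        ∀ ε ∈ Set.Ioo (0:ℝ) 1, ∀ δ ∈ Set.Ioo (0:ℝ) 1, ∀ n : ℕ, nC ε δ ≤ n →
          1 - δ ≤ iidProb (mix η q p) n {S | dTV (A n S) p ≤ α * η + ε}

/-- Subtractive `α`-robust learnability. -/
def SubtractiveRobustlyLearnable (C : Set (X → ℝ)) (α : ℝ) : Prop :=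
  ∃ A : (n : ℕ) → (Fin n → X) → (X → ℝ), IsLearner A ∧
    ∃ nC : ℝ → ℝ → ℕ,
      ∀ η ∈ Set.Ioo (0:ℝ) 1, ∀ p : X → ℝ, IsPMF p →
        (∃ q : X → ℝ, IsPMF q ∧ mix η q p ∈ C) →
        ∀ ε ∈ Set.Ioo (0:ℝ) 1, ∀ δ ∈ Set.Ioo (0:ℝ) 1, ∀ n : ℕ, nC ε δ ≤ n →
          1 - δ ≤ iidProb p n {S | dTV (A n S) p ≤ α * η + ε}

/-- `η`-`α`-robust learnability (known corruption level `η`). -/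
def EtaRobustlyLearnable (C : Set (X → ℝ)) (η α : ℝ) : Prop :=
  ∃ A : (n : ℕ) → (Fin n → X) → (X → ℝ), IsLearner A ∧
    ∃ nC : ℝ → ℝ → ℕ,
      ∀ p : X → ℝ, IsPMF p → distToClass p C ≤ η →
        ∀ ε ∈ Set.Ioo (0:ℝ) 1, ∀ δ ∈ Set.Ioo (0:ℝ) 1, ∀ n : ℕ, nC ε δ ≤ n →
          1 - δ ≤ iidProb p n {S | dTV (A n S) p ≤ α * η + ε}

/-- `η`-additive `α`-robust learnability (known corruption level `η`). -/
def EtaAdditiveRobustlyLearnable (C : Set (X → ℝ)) (η α : ℝ) : Prop :=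
  ∃ A : (n : ℕ) → (Fin n → X) → (X → ℝ), IsLearner A ∧
    ∃ nC : ℝ → ℝ → ℕ,
      ∀ q : X → ℝ, IsPMF q → ∀ p ∈ C,
        ∀ ε ∈ Set.Ioo (0:ℝ) 1, ∀ δ ∈ Set.Ioo (0:ℝ) 1, ∀ n : ℕ, nC ε δ ≤ n →
          1 - δ ≤ iidProb (mix η q p) n {S | dTV (A n S) (mix η q p) ≤ α * η + ε}

/-- `η`-subtractive `α`-robust learnability (known corruption level `η`). -/
def EtaSubtractiveRobustlyLearnable (C : Set (X → ℝ)) (η α : ℝ) : Prop :=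
  ∃ A : (n : ℕ) → (Fin n → X) → (X → ℝ), IsLearner A ∧
    ∃ nC : ℝ → ℝ → ℕ,
      ∀ p : X → ℝ, IsPMF p →
        (∃ q : X → ℝ, IsPMF q ∧ mix η q p ∈ C) →
        ∀ ε ∈ Set.Ioo (0:ℝ) 1, ∀ δ ∈ Set.Ioo (0:ℝ) 1, ∀ n : ℕ, nC ε δ ≤ n →
          1 - δ ≤ iidProb p n {S | dTV (A n S) p ≤ α * η + ε}

/-- The probability of an event under a `PMF`. -/
noncomputable def pmfProb {Y : Type*} (m : PMF Y) (E : Set Y) : ℝ :=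
  (m.toOuterMeasure E).toReal

/-- `(ε,δ)`-differential privacy of a randomized algorithm on inputs of size `n`. -/
def IsDP {Y : Type*} {n : ℕ} (M : (Fin n → X) → PMF Y) (ε δ : ℝ) : Prop :=
  ∀ x x' : Fin n → X, (∃ i : Fin n, ∀ j : Fin n, j ≠ i → x j = x' j) →
    ∀ B : Set Y,
      (M x).toOuterMeasure B ≤
        ENNReal.ofReal (Real.exp ε) * (M x').toOuterMeasure B + ENNReal.ofReal δ

/-- Probability, jointly over `S ~ pⁿ` and the internal randomness of `M`, of the event `E`
on the output of `M`. -/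
noncomputable def randIidProb {Y : Type*} (p : X → ℝ) (n : ℕ)
    (M : (Fin n → X) → PMF Y) (E : Set Y) : ℝ :=
  ∑' S : Fin n → X, (∏ i, p (S i)) * pmfProb (M S) E

/-- Approximate DP learnability. -/
def ApproxDPLearnable (C : Set (X → ℝ)) : Prop :=
  ∃ Alg : (n : ℕ) → (Fin n → X) → PMF (X → ℝ),
    (∀ n S f, f ∈ (Alg n S).support → IsPMF f) ∧
    ∃ nC : ℝ → ℝ → ℝ → ℝ → ℕ,
      ∀ p ∈ C, ∀ α ∈ Set.Ioo (0:ℝ) 1, ∀ β ∈ Set.Ioo (0:ℝ) 1,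
        ∀ ε ∈ Set.Ioo (0:ℝ) 1, ∀ δ ∈ Set.Ioo (0:ℝ) 1, ∀ n : ℕ, nC α β ε δ ≤ n →
          IsDP (Alg n) ε δ ∧
          1 - β ≤ randIidProb p n (Alg n) {f | dTV p f ≤ α}

/-- Pure DP learnability. -/
def PureDPLearnable (C : Set (X → ℝ)) : Prop :=
  ∃ Alg : (n : ℕ) → (Fin n → X) → PMF (X → ℝ),
    (∀ n S f, f ∈ (Alg n S).support → IsPMF f) ∧
    ∃ nC : ℝ → ℝ → ℝ → ℕ,
      ∀ p ∈ C, ∀ α ∈ Set.Ioo (0:ℝ) 1, ∀ β ∈ Set.Ioo (0:ℝ) 1, ∀ ε ∈ Set.Ioo (0:ℝ) 1,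
        ∀ n : ℕ, nC α β ε ≤ n →
          IsDP (Alg n) ε 0 ∧
          1 - β ≤ randIidProb p n (Alg n) {f | dTV p f ≤ α}

/-- `α`-robust learnability by a possibly randomized learner. -/
def RandRobustlyLearnable (C : Set (X → ℝ)) (α : ℝ) : Prop :=
  ∃ Alg : (n : ℕ) → (Fin n → X) → PMF (X → ℝ),
    (∀ n S f, f ∈ (Alg n S).support → IsPMF f) ∧
    ∃ nC : ℝ → ℝ → ℕ,
      ∀ p : X → ℝ, IsPMF p → ∀ ε ∈ Set.Ioo (0:ℝ) 1, ∀ δ ∈ Set.Ioo (0:ℝ) 1,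
        ∀ n : ℕ, nC ε δ ≤ n →
          1 - δ ≤ randIidProb p n (Alg n) {f | dTV f p ≤ α * distToClass p C + ε}

/-- A class `C` admits `(τ, t, nf)` `r`-robust sample compression. -/
def AdmitsCompression (C : Set (X → ℝ)) (τ t nf : ℝ → ℕ) (r : ℝ) : Prop :=
  ∃ J : List X → List Bool → (X → ℝ),
    (∀ L B, J L B ∈ C) ∧
    ∀ q ∈ C, ∀ p : X → ℝ, IsPMF p → dTV p q ≤ r →
      ∀ ε ∈ Set.Ioo (0:ℝ) 1,
        (2 : ℝ) / 3 ≤ iidProb p (nf ε)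
          {S | ∃ L : List X, ∃ B : List Bool,
            L.length ≤ τ ε ∧ (∀ x ∈ L, ∃ i, S i = x) ∧ B.length ≤ t ε ∧
            dTV (J L B) q ≤ r + ε}

/-- The distribution `q_{i,j,k} = (1−1/j)·δ_{(0,0)} + (1/j − 1/k)·U_{A_i×{2j+1}} + (1/k)·δ_{(i,2j+2)}`
over `ℕ × ℕ`, for a given enumeration `A` of the finite nonempty subsets of `ℕ`. -/
noncomputable def qDist (A : ℕ → Finset ℕ) (i j k : ℕ) : ℕ × ℕ → ℝ := fun x =>
  (if x = (0, 0) then 1 - 1 / (j : ℝ) else 0) +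
  (if x.1 ∈ A i ∧ x.2 = 2 * j + 1 then (1 / (j : ℝ) - 1 / (k : ℝ)) / ((A i).card : ℝ) else 0) +
  (if x = (i, 2 * j + 2) then 1 / (k : ℝ) else 0)

/-- The class `Q_g = {q_{i,j,g(j)} : i, j ∈ ℕ, j ≥ 1}`. -/
def Qg (A : ℕ → Finset ℕ) (g : ℕ → ℕ) : Set (ℕ × ℕ → ℝ) :=
  {p | ∃ i j : ℕ, 1 ≤ j ∧ p = qDist A i j (g j)}

/-- The distribution `(1−γ)·δ_{(0,0)} + γ·U_{B×{2j+1}}` over `ℕ × ℕ`. -/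
noncomputable def pDist (γ : ℝ) (B : Finset ℕ) (j : ℕ) : ℕ × ℕ → ℝ := fun x =>
  (if x = (0, 0) then 1 - γ else 0) +
  (if x.1 ∈ B ∧ x.2 = 2 * j + 1 then γ / (B.card : ℝ) else 0)

/-- `g : ℕ → ℕ` is superlinear: `g(t)/t → ∞`. -/
def Superlinear (g : ℕ → ℕ) : Prop :=
  Filter.Tendsto (fun t : ℕ => (g t : ℝ) / (t : ℝ)) Filter.atTop Filter.atTop

open Finset

theorem IsPMF.hasSum {p : X → ℝ} (hp : IsPMF p) : HasSum p 1 := by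
  have hs : Summable p := by
    by_contra hs
    simpa [tsum_eq_zero_of_not_summable hs] using hp.2
  exact hp.2 ▸ hs.hasSum

theorem IsPMF.summable {p : X → ℝ} (hp : IsPMF p) : Summable p :=
  hp.hasSum.summable

theorem hasSum_prod_iid {p : X → ℝ} (hp : IsPMF p) (n : ℕ) :
    HasSum (fun S : Fin n → X => ∏ i, p (S i)) 1 := by
  induction n with
  | zero => simp
  | succ n ih =>
    have hprod : Summable fun z : X × (Fin n → X) => p z.1 * ∏ i, p (z.2 i) :=
      Summable.mul_of_nonneg (f := p) (g := fun S : Fin n → X => ∏ i, p (S i)) hp.summable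
        ih.summable hp.1 fun S => prod_nonneg fun i _ => hp.1 (S i)
    have h := HasSum.mul (f := p) (g := fun S : Fin n → X => ∏ i, p (S i)) hp.hasSum ih hprod
    rw [← (Fin.consEquiv fun _ => X).hasSum_iff]
    rw [one_mul] at h
    refine h.congr_fun fun z => ?_
    simp [Fin.prod_univ_succ, Fin.consEquiv]

theorem hasSum_iidProb {p : X → ℝ} (hp : IsPMF p) (n : ℕ) (E : Set (Fin n → X)) :
    HasSum (E.indicator fun S => ∏ i, p (S i)) (iidProb p n E) :=
  ((hasSum_prod_iid hp n).summable.indicator E).hasSum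

theorem iidProb_univ {p : X → ℝ} (hp : IsPMF p) (n : ℕ) : iidProb p n Set.univ = 1 := by
  simpa using (hasSum_iidProb hp n Set.univ).unique (by simpa using hasSum_prod_iid hp n)

theorem iidProb_mono {p : X → ℝ} (hp : IsPMF p) {n : ℕ} {E F : Set (Fin n → X)} (hEF : E ⊆ F) :
    iidProb p n E ≤ iidProb p n F :=
  hasSum_le (Set.indicator_le_indicator_of_subset hEF fun S => prod_nonneg fun i _ => hp.1 (S i))
    (hasSum_iidProb hp n E) (hasSum_iidProb hp n F)

theorem iidProb_add_le_inter {p : X → ℝ} (hp : IsPMF p) {n : ℕ} (E F : Set (Fin n → X)) :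
    iidProb p n E + iidProb p n F ≤ 1 + iidProb p n (E ∩ F) := by
  refine hasSum_le (fun S => ?_) ((hasSum_iidProb hp n E).add (hasSum_iidProb hp n F))
    ((hasSum_prod_iid hp n).add (hasSum_iidProb hp n (E ∩ F)))
  have hS : 0 ≤ ∏ i, p (S i) := prod_nonneg fun i _ => hp.1 (S i)
  by_cases hE : S ∈ E <;> by_cases hF : S ∈ F <;> simp [Set.indicator, hE, hF, hS]

theorem one_sub_card_mul_le_iidProb_biInter {p : X → ℝ} (hp : IsPMF p) {n : ℕ} {ι : Type*}
    (s : Finset ι) (E : ι → Set (Fin n → X)) {d : ℝ} (hE : ∀ i ∈ s, 1 - d ≤ iidProb p n (E i)) :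
    1 - #s * d ≤ iidProb p n (⋂ i ∈ s, E i) := by
  classical
  induction s using Finset.induction_on with
  | empty => simp [iidProb_univ hp]
  | insert a s ha ih =>
    rw [Finset.set_biInter_insert, card_insert_of_notMem ha]
    have hEa := hE a (mem_insert_self a s)
    have hrest := ih fun i hi => hE i (mem_insert_of_mem hi)
    have := iidProb_add_le_inter hp (E a) (⋂ i ∈ s, E i)
    push_cast
    linarith

theorem summable_abs_sub {p q : X → ℝ} (hp : IsPMF p) (hq : IsPMF q) :
    Summable fun x => |p x - q x| :=
  (hp.summable.sub hq.summable).abs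

theorem dTV_comm (p q : X → ℝ) : dTV p q = dTV q p := by
  simp only [dTV, abs_sub_comm]

theorem dTV_triangle {p q r : X → ℝ} (hp : IsPMF p) (hq : IsPMF q) (hr : IsPMF r) :
    dTV p r ≤ dTV p q + dTV q r := by
  have := hasSum_le (fun x => abs_sub_le (p x) (q x) (r x)) (summable_abs_sub hp hr).hasSum
    ((summable_abs_sub hp hq).hasSum.add (summable_abs_sub hq hr).hasSum)
  simp only [dTV]
  linarith

theorem dTV_le_one {p q : X → ℝ} (hp : IsPMF p) (hq : IsPMF q) : dTV p q ≤ 1 := by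
  have := hasSum_le (fun x => abs_sub_le_iff.2 ⟨by linarith [hq.1 x], by linarith [hp.1 x]⟩)
    (summable_abs_sub hp hq).hasSum (hp.hasSum.add hq.hasSum)
  simp only [dTV]
  linarith

theorem exists_mix_mem_of_le {C : Set (X → ℝ)} {p : X → ℝ} (hp : IsPMF p) {η η' : ℝ}
    (hη : 0 < η) (hηη' : η ≤ η') (h : ∃ q, IsPMF q ∧ mix η q p ∈ C) :
    ∃ q', IsPMF q' ∧ mix η' q' p ∈ C := by
  obtain ⟨q, hq, hmix⟩ := h
  have hη' : 0 < η' := hη.trans_le hηη'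
  refine ⟨fun x => (η * q x + (η' - η) * p x) / η', ⟨fun x => ?_, ?_⟩, ?_⟩
  · have := hq.1 x
    have := hp.1 x
    positivity
  · have := ((hq.hasSum.mul_left η).add (hp.hasSum.mul_left (η' - η))).div_const η'
    rw [this.tsum_eq]
    field_simp
    ring
  · convert hmix using 1
    funext x
    simp only [mix]
    field_simp
    ring

def LepskiAdmissible (c : ℕ → X → ℝ) (r : ℕ → ℝ) (M k : ℕ) : Prop :=
  ∀ j, k ≤ j → j ≤ M → dTV (c k) (c j) ≤ r k + r j

theorem lepskiAdmissible_succ (c : ℕ → X → ℝ) (r : ℕ → ℝ) (M : ℕ) :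
    LepskiAdmissible c r M (M + 1) :=
  fun _ hj hjM => absurd (hj.trans hjM) (by omega)

open Classical in
noncomputable def lepskiIdx (c : ℕ → X → ℝ) (r : ℕ → ℝ) (M : ℕ) : ℕ :=
  Nat.find ⟨M + 1, lepskiAdmissible_succ c r M⟩

theorem dTV_lepskiIdx_le {c : ℕ → X → ℝ} {r : ℕ → ℝ} {M k₀ : ℕ} {p : X → ℝ} (hp : IsPMF p)
    (hc : ∀ k, IsPMF (c k)) (hr : Monotone r) (hk₀ : k₀ ≤ M)
    (hgood : ∀ k, k₀ ≤ k → k ≤ M → dTV (c k) p ≤ r k) :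
    dTV (c (lepskiIdx c r M)) p ≤ 3 * r k₀ := by
  classical
  have hadm : LepskiAdmissible c r M k₀ := fun j hj hjM =>
    calc dTV (c k₀) (c j) ≤ dTV (c k₀) p + dTV p (c j) := dTV_triangle (hc k₀) hp (hc j)
      _ ≤ r k₀ + r j := add_le_add (hgood k₀ le_rfl hk₀) (dTV_comm p (c j) ▸ hgood j hj hjM)
  have hle : lepskiIdx c r M ≤ k₀ := Nat.find_min' _ hadm
  have hsel : LepskiAdmissible c r M (lepskiIdx c r M) :=
    Nat.find_spec ⟨M + 1, lepskiAdmissible_succ c r M⟩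
  calc dTV (c (lepskiIdx c r M)) p ≤ dTV (c (lepskiIdx c r M)) (c k₀) + dTV (c k₀) p :=
        dTV_triangle (hc _) (hc k₀) hp
    _ ≤ (r (lepskiIdx c r M) + r k₀) + r k₀ := add_le_add (hsel k₀ hle hk₀) (hgood k₀ le_rfl hk₀)
    _ ≤ 3 * r k₀ := by linarith [hr hle]

-- The `max s` makes `t ≤ budget f t`, so that `resolution f n` finds `t` below `n`.
def budget (f : ℕ → ℕ) (t : ℕ) : ℕ := (range (t + 1)).sup fun s => max s (f s)

theorem le_budget_self (f : ℕ → ℕ) (t : ℕ) : t ≤ budget f t :=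
  (le_max_left t (f t)).trans (le_sup (f := fun s => max s (f s)) (self_mem_range_succ t))

theorem le_budget (f : ℕ → ℕ) (t : ℕ) : f t ≤ budget f t :=
  (le_max_right t (f t)).trans (le_sup (f := fun s => max s (f s)) (self_mem_range_succ t))

def resolution (f : ℕ → ℕ) (n : ℕ) : ℕ := Nat.findGreatest (fun t => budget f t ≤ n) n

theorem le_resolution {f : ℕ → ℕ} {T n : ℕ} (h : budget f T ≤ n) : T ≤ resolution f n :=
  Nat.le_findGreatest ((le_budget_self f T).trans h) h

theorem budget_resolution_le {f : ℕ → ℕ} {T n : ℕ} (h : budget f T ≤ n) :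
    budget f (resolution f n) ≤ n :=
  Nat.findGreatest_spec (P := fun t => budget f t ≤ n) ((le_budget_self f T).trans h) h

def IsEtaSubtractiveFamily (C : Set (X → ℝ)) (α : ℝ) (A : ℝ → (n : ℕ) → (Fin n → X) → X → ℝ)
    (nC : ℝ → ℝ → ℝ → ℕ) : Prop :=
  (∀ η, IsLearner (A η)) ∧
    ∀ η ∈ Set.Ioo (0 : ℝ) 1, ∀ p : X → ℝ, IsPMF p → (∃ q, IsPMF q ∧ mix η q p ∈ C) →
      ∀ ε ∈ Set.Ioo (0 : ℝ) 1, ∀ δ ∈ Set.Ioo (0 : ℝ) 1, ∀ n : ℕ, nC η ε δ ≤ n →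
        1 - δ ≤ iidProb p n {S | dTV (A η n S) p ≤ α * η + ε}

theorem exists_isEtaSubtractiveFamily {C : Set (X → ℝ)} {α : ℝ}
    (h : ∀ η ∈ Set.Ioo (0 : ℝ) 1, EtaSubtractiveRobustlyLearnable C η α) :
    ∃ A nC, IsEtaSubtractiveFamily C α A nC := by
  have hη : ∀ η : ℝ, ∃ (A : (n : ℕ) → (Fin n → X) → X → ℝ) (nC : ℝ → ℝ → ℕ), IsLearner A ∧
      (η ∈ Set.Ioo (0 : ℝ) 1 → ∀ p : X → ℝ, IsPMF p → (∃ q, IsPMF q ∧ mix η q p ∈ C) →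
        ∀ ε ∈ Set.Ioo (0 : ℝ) 1, ∀ δ ∈ Set.Ioo (0 : ℝ) 1, ∀ n : ℕ, nC ε δ ≤ n →
          1 - δ ≤ iidProb p n {S | dTV (A n S) p ≤ α * η + ε}) := by
    intro η
    by_cases hmem : η ∈ Set.Ioo (0 : ℝ) 1
    · obtain ⟨A, hA, nC, hnC⟩ := h η hmem
      exact ⟨A, nC, hA, fun _ => hnC⟩
    · obtain ⟨A, hA, nC, -⟩ := h (1 / 2) (by norm_num)
      exact ⟨A, nC, hA, fun h' => absurd h' hmem⟩
  choose A nC hA hnC using hη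
  exact ⟨A, nC, hA, hnC⟩

noncomputable def gridLearner (A : ℝ → (n : ℕ) → (Fin n → X) → X → ℝ) (α : ℝ) (t n : ℕ)
    (S : Fin n → X) : X → ℝ :=
  A (lepskiIdx (fun k => A (k / t) n S) (fun k => α * (k / t) + 1 / t) (t - 1) / t) n S

section GridLearner

variable {C : Set (X → ℝ)} {α : ℝ} {A : ℝ → (n : ℕ) → (Fin n → X) → X → ℝ}
  {nC : ℝ → ℝ → ℝ → ℕ} {p : X → ℝ} {η : ℝ}

theorem one_sub_inv_le_iidProb_gridLearner (hfam : IsEtaSubtractiveFamily C α A nC)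
    (hα : 0 ≤ α) (hp : IsPMF p) (hη : 0 < η) (hreal : ∃ q, IsPMF q ∧ mix η q p ∈ C)
    {t n k₀ : ℕ} (ht : 1 < t) (hk₀ : k₀ < t) (hηk₀ : η ≤ k₀ / t)
    (hn : ∀ k < t, nC (k / t) (1 / t) (1 / t ^ 2) ≤ n) :
    1 - 1 / t ≤ iidProb p n {S | dTV (gridLearner A α t n S) p ≤ 3 * (α * (k₀ / t) + 1 / t)} := by
  have htR : (1 : ℝ) < t := by exact_mod_cast ht
  have ht0 : (0 : ℝ) < t := by positivity
  have hr : Monotone fun k : ℕ => α * (k / t) + 1 / t := fun a b hab => by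
    have : (a : ℝ) / t ≤ b / t := by gcongr
    simp only
    gcongr
  let E (k : ℕ) := {S : Fin n → X | dTV (A (k / t) n S) p ≤ α * (k / t) + 1 / t}
  have hE : ∀ k ∈ Icc k₀ (t - 1), 1 - 1 / (t : ℝ) ^ 2 ≤ iidProb p n (E k) := by
    intro k hk
    obtain ⟨hk₀k, hkt⟩ := mem_Icc.1 hk
    have hηk : η ≤ k / t := hηk₀.trans (by gcongr)
    have hkt' : (k : ℝ) < t := by exact_mod_cast (show k < t by omega)
    refine hfam.2 _ ⟨hη.trans_le hηk, (div_lt_one ht0).2 hkt'⟩ p hp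
      (exists_mix_mem_of_le hp hη hηk hreal) _ ⟨by positivity, (div_lt_one ht0).2 htR⟩ _
      ⟨by positivity, (div_lt_one (by positivity)).2 (by nlinarith)⟩ n (hn k (by omega))
  have hcard : 1 - 1 / (t : ℝ) ≤ 1 - #(Icc k₀ (t - 1)) * (1 / (t : ℝ) ^ 2) := by
    have : (#(Icc k₀ (t - 1)) : ℝ) ≤ t := by exact_mod_cast (by simp; omega)
    have : (#(Icc k₀ (t - 1)) : ℝ) * (1 / (t : ℝ) ^ 2) ≤ t * (1 / (t : ℝ) ^ 2) := by gcongr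
    have : (t : ℝ) * (1 / (t : ℝ) ^ 2) = 1 / t := by field_simp
    linarith
  refine hcard.trans <| (one_sub_card_mul_le_iidProb_biInter hp _ E hE).trans <|
    iidProb_mono hp fun S hS => ?_
  simp only [Set.mem_iInter, mem_Icc] at hS
  exact dTV_lepskiIdx_le (c := fun k : ℕ => A (k / t) n S) hp (fun k => hfam.1 _ n S) hr
    (by omega) fun k hk hkt => hS k ⟨hk, hkt⟩

theorem le_iidProb_gridLearner (hfam : IsEtaSubtractiveFamily C α A nC) (hα : 1 ≤ α)
    (hp : IsPMF p) (hη : η ∈ Set.Ioo (0 : ℝ) 1) (hreal : ∃ q, IsPMF q ∧ mix η q p ∈ C)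
    {ε δ : ℝ} (hε : 0 < ε) (hδ : δ ∈ Set.Ioo (0 : ℝ) 1) {t n : ℕ}
    (htε : (3 * α + 3) / ε ≤ t) (htδ : 1 / δ ≤ t)
    (hn : ∀ k < t, nC (k / t) (1 / t) (1 / t ^ 2) ≤ n) :
    1 - δ ≤ iidProb p n {S | dTV (gridLearner A α t n S) p ≤ 3 * α * η + ε} := by
  obtain ⟨hη0, hη1⟩ := hη
  obtain ⟨hδ0, hδ1⟩ := hδ
  have htR : (1 : ℝ) < t := (one_lt_one_div hδ0 hδ1).trans_le htδ
  have ht0 : (0 : ℝ) < t := by positivity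
  have hδt : 1 / (t : ℝ) ≤ δ := (one_div_le ht0 hδ0).2 htδ
  have hεt : (3 * α + 3) / t ≤ ε := (div_le_iff₀ ht0).2 (by linarith [(div_le_iff₀ hε).1 htε])
  by_cases hk₀ : ⌈η * t⌉₊ < t
  · have hηk : η ≤ ⌈η * t⌉₊ / t := (le_div_iff₀ ht0).2 (Nat.le_ceil _)
    have hkη : (⌈η * t⌉₊ : ℝ) / t ≤ η + 1 / t := by
      rw [div_le_iff₀ ht0, add_mul, one_div_mul_cancel ht0.ne']
      exact (Nat.ceil_lt_add_one (by positivity)).le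
    have hbound : 3 * (α * (⌈η * t⌉₊ / t) + 1 / t) ≤ 3 * α * η + ε := by
      have := mul_le_mul_of_nonneg_left hkη (by linarith : 0 ≤ α)
      have : 3 * α * (1 / t) + 3 * (1 / t) = (3 * α + 3) / t := by ring
      linarith
    refine (by linarith : 1 - δ ≤ 1 - 1 / t).trans <|
      (one_sub_inv_le_iidProb_gridLearner hfam (by linarith) hp hη0 hreal
        (by exact_mod_cast htR) hk₀ hηk hn).trans <|
      iidProb_mono hp fun S hS => le_trans hS hbound
  · -- here `η > 1 - 1 / t ≥ 1 / 2`, so the bound `3αη ≥ 1` holds for every sample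
    have ht2 : (2 : ℝ) ≤ t := by exact_mod_cast (show 2 ≤ t by exact_mod_cast htR)
    have : (t : ℝ) < η * t + 1 :=
      (Nat.cast_le.2 (not_lt.1 hk₀)).trans_lt (Nat.ceil_lt_add_one (by positivity))
    have hηα : 1 ≤ 3 * α * η := by nlinarith [mul_nonneg (sub_nonneg.2 ht2) (sub_nonneg.2 hη1.le)]
    have huniv : {S | dTV (gridLearner A α t n S) p ≤ 3 * α * η + ε} = Set.univ :=
      Set.eq_univ_of_forall fun S => (dTV_le_one (hfam.1 _ n S) hp).trans (by linarith)
    rw [huniv, iidProb_univ hp]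
    linarith

end GridLearner

theorem eta_subtractive_all_eta_implies_subtractive_general {X : Type*}
    (C : Set (X → ℝ)) (α : ℝ) (hα : 1 ≤ α)
    (h : ∀ η ∈ Set.Ioo (0:ℝ) 1, EtaSubtractiveRobustlyLearnable C η α) :
    SubtractiveRobustlyLearnable C (3 * α) := by
  obtain ⟨A, nC, hfam⟩ := exists_isEtaSubtractiveFamily h
  let f (t : ℕ) : ℕ := (range t).sup fun k => nC (k / t) (1 / t) (1 / t ^ 2)
  refine ⟨fun n => gridLearner A α (resolution f n) n, fun n S => hfam.1 _ n S,
    fun ε δ => budget f ⌈(3 * α + 3) / ε + 1 / δ⌉₊, ?_⟩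
  intro η hη p hp hreal ε hε δ hδ n hn
  have hT : (3 * α + 3) / ε + 1 / δ ≤ resolution f n :=
    (Nat.le_ceil _).trans (by exact_mod_cast le_resolution hn)
  have hpos : 0 < (3 * α + 3) / ε ∧ 0 < 1 / δ := ⟨div_pos (by linarith) hε.1, one_div_pos.2 hδ.1⟩
  refine le_iidProb_gridLearner hfam hα hp hη hreal hε.1 hδ (by linarith) (by linarith)
    fun k hk => ?_
  exact (le_sup (f := fun k : ℕ => nC (k / _) _ _) (mem_range.2 hk)).trans
    ((le_budget f _).trans (budget_resolution_le hn))

/-- if `C` is `η`-subtractive `α`-robustly learnable for every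
`η ∈ (0,1)`, then `C` is subtractive `3α`-robustly learnable. -/
theorem eta_subtractive_all_eta_implies_subtractive {X : Type*} [Countable X]
    (C : Set (X → ℝ)) (hC : ∀ p ∈ C, IsPMF p) (α : ℝ) (hα : 1 ≤ α)
    (h : ∀ η ∈ Set.Ioo (0:ℝ) 1, EtaSubtractiveRobustlyLearnable C η α) :
    SubtractiveRobustlyLearnable C (3 * α) :=
  eta_subtractive_all_eta_implies_subtractive_general C α hα h

end RobustDistLearn
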